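/- arXiv:1212.4048 — 3 statements merged into one kernel-verified Lean document; each statement's English description precedes it below -/
import Mathlib

section
/- For real numbers a < b and t with t + a > 0, (1/(2π)) ∫_a^b log(x+t)/√((b-x)(x-a)) dx = log((√(t+a)+√(t+b))/2). -/
/-!
Substituting `x = (a + b) / 2 + (b - a) / 2 * cos θ` turns the arcsine weight into `dθ` on
`(0, π)`. With `u = (√(t + a) + √(t + b)) / 2` and `v = (√(t + b) - √(t + a)) / 2` one has
`x + t = u² + v² + 2uv cos θ = ‖u e^{iθ} + v‖²`. As `-v` lies in the closed disc of radius
`u`, the circle average of `log ‖z + v‖` over `|z| = u` is `log u`, and the symmetry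
`θ ↦ 2π - θ` makes the integral over `(0, π)` half of the one over the full circle,
i.e. `2π log u`.
-/

open MeasureTheory Set Real

theorem intervalIntegral.integral_zero_two_mul_of_reflect {E : Type*} [NormedAddCommGroup E]
    [NormedSpace ℝ E] {f : ℝ → E} {c : ℝ} (hf : IntervalIntegrable f volume 0 (2 * c))
    (hrefl : ∀ x, f (2 * c - x) = f x) :
    ∫ x in 0..2 * c, f x = 2 • ∫ x in 0..c, f x := by
  have hc : c ∈ uIcc 0 (2 * c) := by
    rcases le_total 0 c with h | h
    · exact mem_uIcc.2 (Or.inl ⟨h, by linarith⟩)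
    · exact mem_uIcc.2 (Or.inr ⟨by linarith, h⟩)
  have hsecond : ∫ x in c..2 * c, f x = ∫ x in 0..c, f x := by
    have h := intervalIntegral.integral_comp_sub_left f (a := c) (b := 2 * c) (2 * c)
    rwa [sub_self, two_mul, add_sub_cancel_right, ← two_mul, funext hrefl] at h
  rw [← intervalIntegral.integral_add_adjacent_intervals
    (hf.mono_set (uIcc_subset_uIcc left_mem_uIcc hc))
    (hf.mono_set (uIcc_subset_uIcc hc right_mem_uIcc)), hsecond, two_nsmul]

theorem norm_circleMap_zero_add_sq (u v θ : ℝ) :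
    ‖circleMap 0 u θ + v‖ ^ 2 = u ^ 2 + v ^ 2 + 2 * u * v * cos θ := by
  rw [Complex.sq_norm, Complex.normSq_apply]
  simp only [circleMap, zero_add, Complex.add_re, Complex.mul_re, Complex.ofReal_re,
    Complex.exp_ofReal_mul_I_re, Complex.ofReal_im, Complex.exp_ofReal_mul_I_im, zero_mul,
    sub_zero, Complex.add_im, Complex.mul_im, add_zero]
  nlinarith [sin_sq_add_cos_sq θ]

theorem log_sq_add_sq_add_mul_cos (u v θ : ℝ) :
    log (u ^ 2 + v ^ 2 + 2 * u * v * cos θ) =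
      2 * log ‖circleMap 0 u θ - ((-v : ℝ) : ℂ)‖ := by
  rw [Complex.ofReal_neg, sub_neg_eq_add, ← norm_circleMap_zero_add_sq, log_pow]
  norm_num

theorem integral_log_sq_add_sq_add_mul_cos {u v : ℝ} (huv : |v| ≤ |u|) :
    ∫ θ in 0..π, log (u ^ 2 + v ^ 2 + 2 * u * v * cos θ) = 2 * π * log u := by
  have hmean : circleAverage (log ‖· - ((-v : ℝ) : ℂ)‖) 0 u = log u :=
    circleAverage_log_norm_sub_const_of_mem_closedBall (by simpa using huv)
  have hint : IntervalIntegrable (fun θ => log (u ^ 2 + v ^ 2 + 2 * u * v * cos θ))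
      volume 0 (2 * π) := by
    simp_rw [log_sq_add_sq_add_mul_cos]
    exact (circleIntegrable_log_norm_sub_const u).const_mul 2
  have hfull : ∫ θ in 0..2 * π, log (u ^ 2 + v ^ 2 + 2 * u * v * cos θ) = 4 * π * log u := by
    rw [circleAverage_def, smul_eq_mul] at hmean
    simp_rw [log_sq_add_sq_add_mul_cos, intervalIntegral.integral_const_mul]
    field_simp at hmean
    rw [hmean]
    ring
  rw [intervalIntegral.integral_zero_two_mul_of_reflect hint (by simp [cos_two_pi_sub]),
    nsmul_eq_mul] at hfull
  push_cast at hfull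
  linarith

theorem integral_Ioo_div_sqrt_eq_integral_cos {a b : ℝ} (hab : a < b) (f : ℝ → ℝ) :
    ∫ x in Ioo a b, f x / √((b - x) * (x - a)) =
      ∫ θ in Ioo 0 π, f ((b - a) / 2 * cos θ + (a + b) / 2) := by
  have hr : 0 < (b - a) / 2 := by linarith
  have himage : (fun θ => (b - a) / 2 * cos θ + (a + b) / 2) '' Ioo 0 π = Ioo a b := by
    have hcos : cos '' Ioo 0 π = Ioo (-1) 1 := cosPartialHomeomorph.image_source_eq_target
    rw [← image_image (fun y => (b - a) / 2 * y + (a + b) / 2) cos, hcos, image_affine_Ioo hr]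
    congr 1 <;> ring
  have hinj : InjOn (fun θ => (b - a) / 2 * cos θ + (a + b) / 2) (Ioo 0 π) :=
    fun θ₁ h₁ θ₂ h₂ h => injOn_cos (Ioo_subset_Icc_self h₁) (Ioo_subset_Icc_self h₂)
      (mul_left_cancel₀ hr.ne' (add_right_cancel h))
  have hderiv : ∀ θ ∈ Ioo 0 π, HasDerivWithinAt (fun θ => (b - a) / 2 * cos θ + (a + b) / 2)
      ((b - a) / 2 * -sin θ) (Ioo 0 π) θ := fun θ _ =>
    (((hasDerivAt_cos θ).const_mul _).add_const _).hasDerivWithinAt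
  rw [← himage, integral_image_eq_integral_abs_deriv_smul measurableSet_Ioo hderiv hinj]
  refine setIntegral_congr_fun measurableSet_Ioo fun θ ⟨h0, hπ⟩ => ?_
  have hsin : 0 < sin θ := sin_pos_of_pos_of_lt_pi h0 hπ
  have hba : b - a ≠ 0 := by linarith
  have hsqrt : √((b - ((b - a) / 2 * cos θ + (a + b) / 2)) *
      ((b - a) / 2 * cos θ + (a + b) / 2 - a)) = (b - a) / 2 * sin θ := by
    rw [← sqrt_sq (by positivity : 0 ≤ (b - a) / 2 * sin θ)]
    congr 1
    linear_combination -(b - a) ^ 2 / 4 * sin_sq_add_cos_sq θ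
  rw [smul_eq_mul, hsqrt, abs_mul, abs_neg, abs_of_pos hr, abs_of_pos hsin]
  field_simp

theorem stmt_3 (a b t : ℝ) (hab : a < b) (hta : 0 < t + a) :
    (1 / (2 * Real.pi)) * ∫ x in Set.Ioo a b, Real.log (x + t) / Real.sqrt ((b - x) * (x - a))
      = Real.log ((Real.sqrt (t + a) + Real.sqrt (t + b)) / 2) := by
  set u := (√(t + a) + √(t + b)) / 2 with hu
  set v := (√(t + b) - √(t + a)) / 2 with hv
  have huv : |v| ≤ |u| := by
    rw [abs_of_nonneg (by positivity : 0 ≤ u), abs_le]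
    constructor <;> linarith [sqrt_nonneg (t + a), sqrt_nonneg (t + b)]
  have hparam (θ : ℝ) :
      (b - a) / 2 * cos θ + (a + b) / 2 + t = u ^ 2 + v ^ 2 + 2 * u * v * cos θ := by
    have ha := sq_sqrt hta.le
    have hb := sq_sqrt (by linarith : 0 ≤ t + b)
    rw [hu, hv]
    linear_combination (cos θ / 2 - 1 / 2) * ha - (1 / 2 + cos θ / 2) * hb
  rw [integral_Ioo_div_sqrt_eq_integral_cos hab, ← integral_Ioc_eq_integral_Ioo,
    ← intervalIntegral.integral_of_le pi_pos.le]
  simp_rw [hparam, integral_log_sq_add_sq_add_mul_cos huv]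
  field_simp
end

section
/- For real numbers 0 < a < b and t with t + a > 0, (1/(2π)) ∫_a^b x·log(x+t)/√((b-x)(x-a)) dx = (√(t+a) - √(t+b))²/4 + ((a+b)/4)·log(((W(t)+t)² - ab)/(4t)), where W(t) = √((t+a)(t+b)). -/
/-!
Substituting `x = m + r cos θ` with `m = (a + b) / 2`, `r = (b - a) / 2` cancels the square root
and turns the integral into `∫₀^π (m + r cos θ) log (c + r cos θ) dθ` with `c = m + t > r`.
Writing `c + r cos θ = A |1 + ρ e^{iθ}|²` with `W = √(c² - r²)`, `A = (c + W) / 2` and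
`ρ = r / (c + W)`, the Taylor series of `log (1 + z)` expands the logarithm into the cosine series
`log A + Σ 2 (-1)^(n+1) ρ^n cos (n θ) / n`, and integrating against `m + r cos θ` keeps only the
constant and first Fourier coefficients.
-/

open Real MeasureTheory Set

-- The `n = 0` term is `0` because `x / 0 = 0`.
theorem hasSum_log_one_add_two_mul_cos_add_sq {ρ : ℝ} (hρ : |ρ| < 1) (θ : ℝ) :
    HasSum (fun n : ℕ => 2 * (-1) ^ (n + 1) * ρ ^ n / n * cos (n * θ))
      (log (1 + 2 * ρ * cos θ + ρ ^ 2)) := by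
  set z : ℂ := ρ * Complex.exp (θ * Complex.I)
  have hz : ‖z‖ < 1 := by
    rwa [norm_mul, Complex.norm_real, Complex.norm_exp_ofReal_mul_I, mul_one, Real.norm_eq_abs]
  have h_norm_sq : ‖1 + z‖ ^ 2 = 1 + 2 * ρ * cos θ + ρ ^ 2 := by
    rw [Complex.sq_norm, Complex.normSq_apply]
    simp only [z, Complex.add_re, Complex.add_im, Complex.one_re, Complex.one_im,
      Complex.re_ofReal_mul, Complex.im_ofReal_mul, Complex.exp_ofReal_mul_I_re,
      Complex.exp_ofReal_mul_I_im]
    linear_combination ρ ^ 2 * sin_sq_add_cos_sq θ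
  have h_re (n : ℕ) : 2 * ((-1) ^ (n + 1) * z ^ n / n).re
      = 2 * (-1) ^ (n + 1) * ρ ^ n / n * cos (n * θ) := by
    have : (-1) ^ (n + 1) * z ^ n / n
        = (((-1) ^ (n + 1) * ρ ^ n / n : ℝ) : ℂ) * Complex.exp ((n * θ : ℝ) * Complex.I) := by
      simp only [z, mul_pow, ← Complex.exp_nat_mul]
      push_cast
      ring_nf
    rw [this, Complex.re_ofReal_mul, Complex.exp_ofReal_mul_I_re]
    ring
  have := ((Complex.hasSum_taylorSeries_log hz).mapL Complex.reCLM).mul_left 2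
  simp only [Complex.reCLM_apply, h_re, Complex.log_re] at this
  rwa [← h_norm_sq, Real.log_pow, Nat.cast_ofNat]

theorem integral_cos_int_mul_zero_pi (k : ℤ) :
    ∫ θ in (0 : ℝ)..π, cos (k * θ) = if k = 0 then π else 0 := by
  split_ifs with hk
  · simp [hk]
  · have hk' : (k : ℝ) ≠ 0 := Int.cast_ne_zero.mpr hk
    rw [intervalIntegral.integral_comp_mul_left (fun x => cos x) hk', integral_cos,
      sin_int_mul_pi]
    simp

theorem integral_cos_nat_mul_zero_pi (n : ℕ) :
    ∫ θ in (0 : ℝ)..π, cos (n * θ) = if n = 0 then π else 0 := by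
  exact_mod_cast integral_cos_int_mul_zero_pi n

theorem integral_cos_mul_cos_nat_mul_zero_pi (n : ℕ) :
    ∫ θ in (0 : ℝ)..π, cos θ * cos (n * θ) = if n = 1 then π / 2 else 0 := by
  have h_prod (θ : ℝ) : cos θ * cos (n * θ)
      = cos (((n - 1 : ℤ) : ℝ) * θ) / 2 + cos (((n + 1 : ℤ) : ℝ) * θ) / 2 := by
    have := two_mul_cos_mul_cos (n * θ) θ
    push_cast
    rw [mul_comm (cos θ), sub_one_mul, add_one_mul]
    linarith
  simp_rw [h_prod]
  rw [intervalIntegral.integral_add (by apply Continuous.intervalIntegrable; fun_prop)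
      (by apply Continuous.intervalIntegrable; fun_prop),
    intervalIntegral.integral_div, intervalIntegral.integral_div,
    integral_cos_int_mul_zero_pi, integral_cos_int_mul_zero_pi]
  split_ifs <;> first | omega | norm_num

theorem integral_add_mul_cos_mul_of_hasSum_cos {a : ℕ → ℝ} (ha : Summable a) {f : ℝ → ℝ}
    (hf : ∀ θ, HasSum (fun n : ℕ => a n * cos (n * θ)) (f θ)) (m r : ℝ) :
    ∫ θ in (0 : ℝ)..π, (m + r * cos θ) * f θ = π * m * a 0 + π * r * a 1 / 2 := by
  have h_terms (n : ℕ) : ∫ θ in (0 : ℝ)..π, (m + r * cos θ) * (a n * cos (n * θ))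
      = if n = 0 then π * m * a 0 else if n = 1 then π * r * a 1 / 2 else 0 := by
    have h_expand (θ : ℝ) : (m + r * cos θ) * (a n * cos (n * θ))
        = m * a n * cos (n * θ) + r * a n * (cos θ * cos (n * θ)) := by
      ring
    simp_rw [h_expand]
    rw [intervalIntegral.integral_add (by apply Continuous.intervalIntegrable; fun_prop)
        (by apply Continuous.intervalIntegrable; fun_prop),
      intervalIntegral.integral_const_mul, intervalIntegral.integral_const_mul,
      integral_cos_nat_mul_zero_pi, integral_cos_mul_cos_nat_mul_zero_pi]
    rcases n with _ | _ | n <;> simp <;> ring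
  have h_sum : HasSum (fun n : ℕ => ∫ θ in (0 : ℝ)..π, (m + r * cos θ) * (a n * cos (n * θ)))
      (∫ θ in (0 : ℝ)..π, (m + r * cos θ) * f θ) := by
    refine intervalIntegral.hasSum_integral_of_dominated_convergence
      (fun n _ => (|m| + |r|) * |a n|) (fun n => by fun_prop) (fun n => ?_)
      (.of_forall fun θ _ => ha.abs.mul_left _) intervalIntegrable_const
      (.of_forall fun θ _ => (hf θ).mul_left _)
    refine .of_forall fun θ _ => ?_
    have h_affine : |m + r * cos θ| ≤ |m| + |r| :=
      calc |m + r * cos θ| ≤ |m| + |r| * |cos θ| := by rw [← abs_mul]; exact abs_add_le _ _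
        _ ≤ |m| + |r| := by gcongr; exact mul_le_of_le_one_right (abs_nonneg r) (abs_cos_le_one θ)
    calc ‖(m + r * cos θ) * (a n * cos (n * θ))‖
        ≤ (|m| + |r|) * (|a n| * 1) := by
          simp only [norm_mul, Real.norm_eq_abs]
          gcongr
          exact abs_cos_le_one _
      _ = (|m| + |r|) * |a n| := by rw [mul_one]
  rw [← h_sum.tsum_eq, tsum_eq_sum (s := {0, 1}) (by intro n hn; simp_all),
    Finset.sum_pair zero_ne_one, h_terms, h_terms]
  simp

theorem summable_two_mul_neg_one_pow_mul_pow_div {ρ : ℝ} (hρ : |ρ| < 1) :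
    Summable fun n : ℕ => 2 * (-1) ^ (n + 1) * ρ ^ n / n := by
  refine Summable.of_norm_bounded ((summable_geometric_of_lt_one (abs_nonneg ρ) hρ).mul_left 2)
    fun n => ?_
  rw [norm_div, norm_mul, norm_mul, norm_pow, norm_pow, norm_neg, norm_one, one_pow, mul_one,
    Real.norm_eq_abs, Real.norm_eq_abs, Real.norm_natCast, abs_two]
  rcases n.eq_zero_or_pos with rfl | hn
  · simp
  · exact div_le_self (by positivity) (by exact_mod_cast hn)

theorem integral_add_mul_cos_mul_log_add_mul_cos {m r c : ℝ} (hrc : |r| < c) :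
    ∫ θ in (0 : ℝ)..π, (m + r * cos θ) * log (c + r * cos θ)
      = π * m * log ((c + √(c ^ 2 - r ^ 2)) / 2) + π * (c - √(c ^ 2 - r ^ 2)) := by
  set W := √(c ^ 2 - r ^ 2)
  have hW_sq : W ^ 2 = c ^ 2 - r ^ 2 := sq_sqrt (by nlinarith [sq_abs r, abs_nonneg r])
  have hcW : 0 < c + W := by linarith [abs_nonneg r, sqrt_nonneg (c ^ 2 - r ^ 2)]
  set A := (c + W) / 2
  set ρ := r / (c + W)
  have hρ : |ρ| < 1 := by
    rw [abs_div, abs_of_pos hcW, div_lt_one hcW]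
    linarith [sqrt_nonneg (c ^ 2 - r ^ 2)]
  have h_factor (θ : ℝ) : c + r * cos θ = A * (1 + 2 * ρ * cos θ + ρ ^ 2) := by
    simp only [A, ρ]
    field_simp
    linear_combination (-1) * hW_sq
  have h_log (θ : ℝ) : log (c + r * cos θ) = log A + log (1 + 2 * ρ * cos θ + ρ ^ 2) := by
    have hA : 0 < A := half_pos hcW
    have h_pos : 0 < c + r * cos θ := by
      nlinarith [abs_le.mp (abs_cos_le_one θ), abs_le.mp (le_refl |r|)]
    rw [h_factor] at h_pos ⊢
    exact log_mul hA.ne' (pos_of_mul_pos_right h_pos hA.le).ne'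
  have h_series (θ : ℝ) : HasSum
      (fun n : ℕ => ((if n = 0 then log A else 0) + 2 * (-1) ^ (n + 1) * ρ ^ n / n) * cos (n * θ))
      (log (c + r * cos θ)) := by
    simp_rw [add_mul]
    rw [h_log]
    refine .add ?_ (hasSum_log_one_add_two_mul_cos_add_sq hρ θ)
    convert hasSum_ite_eq 0 (log A) using 2 with n
    split_ifs with hn <;> simp [hn]
  rw [integral_add_mul_cos_mul_of_hasSum_cos
    ((hasSum_ite_eq 0 (log A)).summable.add (summable_two_mul_neg_one_pow_mul_pow_div hρ)) h_series]
  simp only [ρ, if_true, one_ne_zero, if_false]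
  field_simp
  linear_combination 2 * hW_sq

theorem image_add_mul_cos_Ioo (m : ℝ) {r : ℝ} (hr : 0 < r) :
    (fun θ => m + r * cos θ) '' Ioo 0 π = Ioo (m - r) (m + r) := by
  have h_cos : cos '' Ioo 0 π = Ioo (-1) 1 := cosPartialHomeomorph.image_source_eq_target
  have h_comp : (fun θ => m + r * cos θ) = (m + ·) ∘ (r * ·) ∘ cos := rfl
  rw [h_comp, image_comp, image_comp, h_cos, image_mul_left_Ioo hr, image_const_add_Ioo]
  ring_nf

theorem setIntegral_Ioo_eq_setIntegral_add_mul_cos (f : ℝ → ℝ) (m : ℝ) {r : ℝ} (hr : 0 < r) :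
    ∫ x in Ioo (m - r) (m + r), f x = ∫ θ in Ioo 0 π, r * sin θ * f (m + r * cos θ) := by
  have h_deriv (θ : ℝ) (_ : θ ∈ Ioo 0 π) :
      HasDerivWithinAt (fun θ => m + r * cos θ) (r * -sin θ) (Ioo 0 π) θ :=
    (((hasDerivAt_cos θ).const_mul r).const_add m).hasDerivWithinAt
  have h_inj : InjOn (fun θ => m + r * cos θ) (Ioo 0 π) := fun θ₁ h₁ θ₂ h₂ h =>
    injOn_cos (Ioo_subset_Icc_self h₁) (Ioo_subset_Icc_self h₂)
      (mul_left_cancel₀ hr.ne' (add_left_cancel h))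
  rw [← image_add_mul_cos_Ioo m hr,
    integral_image_eq_integral_abs_deriv_smul measurableSet_Ioo h_deriv h_inj]
  refine setIntegral_congr_fun measurableSet_Ioo fun θ hθ => ?_
  rw [smul_eq_mul, abs_mul, abs_neg, abs_of_pos hr, abs_of_pos (sin_pos_of_pos_of_lt_pi hθ.1 hθ.2)]

theorem setIntegral_Ioo_mul_log_add_div_sqrt {m r t : ℝ} (hr : 0 < r) (hrt : r < m + t) :
    ∫ x in Ioo (m - r) (m + r), x * log (x + t) / √((m + r - x) * (x - (m - r)))
      = π * m * log ((m + t + √((m + t) ^ 2 - r ^ 2)) / 2)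
        + π * (m + t - √((m + t) ^ 2 - r ^ 2)) := by
  have h_integrand (θ : ℝ) (hθ : θ ∈ Ioo 0 π) :
      r * sin θ * ((m + r * cos θ) * log (m + r * cos θ + t)
        / √((m + r - (m + r * cos θ)) * (m + r * cos θ - (m - r))))
      = (m + r * cos θ) * log (m + t + r * cos θ) := by
    have h_sin : 0 < sin θ := sin_pos_of_pos_of_lt_pi hθ.1 hθ.2
    have h_sqrt : √((m + r - (m + r * cos θ)) * (m + r * cos θ - (m - r))) = r * sin θ := by
      rw [← sqrt_sq (mul_pos hr h_sin).le]
      congr 1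
      linear_combination (-r ^ 2) * sin_sq_add_cos_sq θ
    rw [h_sqrt, add_right_comm]
    field_simp
  rw [setIntegral_Ioo_eq_setIntegral_add_mul_cos _ m hr,
    setIntegral_congr_fun measurableSet_Ioo h_integrand, ← integral_Ioc_eq_integral_Ioo,
    ← intervalIntegral.integral_of_le pi_pos.le,
    integral_add_mul_cos_mul_log_add_mul_cos (by rwa [abs_of_pos hr])]

theorem stmt_5 (a b t : ℝ) (ha : 0 < a) (hab : a < b) (ht : 0 < t) :
    (1 / (2 * Real.pi)) *
        ∫ x in Set.Ioo a b, x * Real.log (x + t) / Real.sqrt ((b - x) * (x - a))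
      = (Real.sqrt (t + a) - Real.sqrt (t + b)) ^ 2 / 4 +
        ((a + b) / 4) *
          Real.log (((Real.sqrt ((t + a) * (t + b)) + t) ^ 2 - a * b) / (4 * t)) := by
  have h := setIntegral_Ioo_mul_log_add_div_sqrt (m := (a + b) / 2) (r := (b - a) / 2) (t := t)
    (by linarith) (by linarith)
  rw [show (a + b) / 2 - (b - a) / 2 = a by ring, show (a + b) / 2 + (b - a) / 2 = b by ring,
    show ((a + b) / 2 + t) ^ 2 - ((b - a) / 2) ^ 2 = (t + a) * (t + b) by ring] at h
  have h_diff_sq : (√(t + a) - √(t + b)) ^ 2 = (t + a) + (t + b) - 2 * √((t + a) * (t + b)) := by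
    rw [sub_sq, sq_sqrt (by linarith), sq_sqrt (by linarith), mul_assoc, ← sqrt_mul (by linarith)]
    ring
  rw [h, h_diff_sq]
  set W := √((t + a) * (t + b))
  have hW_sq : W ^ 2 = (t + a) * (t + b) := sq_sqrt (by nlinarith)
  have h_log_arg : ((W + t) ^ 2 - a * b) / (4 * t) = ((a + b) / 2 + t + W) / 2 := by
    field_simp
    linear_combination 4 * hW_sq
  rw [h_log_arg]
  field_simp
  ring
end

section
/- For real numbers a < b with a + t₁ > 0 and a + t₂ > 0, (1/(2π)) ∫_a^b log(x+t₂)/((x+t₁)√((b-x)(x-a))) dx = (1/(2W(t₁)))·log(((W(t₁)+W(t₂))² - (t₁-t₂)²)/(√(t₁+a)+√(t₁+b))²), where W(t) = √((t+a)(t+b)). -/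
/-!
Substituting `x = (a + b)/2 - r cos θ` with `r = (b - a)/2` turns the integral into
`∫₀^π log (p₂ - r cos θ) / (p₁ - r cos θ) dθ` with `pᵢ = tᵢ + (a + b)/2`, and `W(tᵢ) = √(pᵢ² - r²)`.
Each `p - r cos θ` equals `r / (2k) · |1 - k e^{iθ}|²` for some `0 < k < 1`. Both
`(1 - k cos θ) / |1 - k e^{iθ}|² = ∑ kⁿ cos nθ` and `log |1 - k e^{iθ}|² = -2 ∑ kⁿ cos nθ / n`
are cosine series, so orthogonality of `cos nθ` on `[0, π]` gives
`∫₀^π cos mθ / |1 - k e^{iθ}|² dθ = π kᵐ / (1 - k²)`, and then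
`∫₀^π log |1 - k₂ e^{iθ}|² / |1 - k₁ e^{iθ}|² dθ = π log (1 - k₁k₂)² / (1 - k₁²)`.
-/

open MeasureTheory Real Set

noncomputable def poissonDenom (k θ : ℝ) : ℝ := 1 - 2 * k * cos θ + k ^ 2

lemma sq_one_sub_abs_le_poissonDenom (k θ : ℝ) : (1 - |k|) ^ 2 ≤ poissonDenom k θ := by
  have h : k * cos θ ≤ |k| := by
    calc k * cos θ ≤ |k * cos θ| := le_abs_self _
      _ = |k| * |cos θ| := abs_mul k _
      _ ≤ |k| := mul_le_of_le_one_right (abs_nonneg k) (abs_cos_le_one θ)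
  rw [poissonDenom, sub_sq, ← sq_abs k]
  linarith

lemma poissonDenom_pos {k : ℝ} (hk : |k| < 1) (θ : ℝ) : 0 < poissonDenom k θ :=
  (pow_pos (sub_pos.2 hk) 2).trans_le (sq_one_sub_abs_le_poissonDenom k θ)

lemma continuous_poissonDenom (k : ℝ) : Continuous (poissonDenom k) := by
  unfold poissonDenom; fun_prop

lemma normSq_one_sub_ofReal_mul_exp (k θ : ℝ) :
    Complex.normSq (1 - k * Complex.exp (θ * Complex.I)) = poissonDenom k θ := by
  rw [Complex.normSq_apply, poissonDenom]
  simp only [Complex.sub_re, Complex.sub_im, Complex.one_re, Complex.one_im,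
    Complex.re_ofReal_mul, Complex.im_ofReal_mul, Complex.exp_ofReal_mul_I_re,
    Complex.exp_ofReal_mul_I_im]
  linear_combination k ^ 2 * sin_sq_add_cos_sq θ

lemma re_ofReal_mul_exp_pow (k θ : ℝ) (n : ℕ) :
    ((k * Complex.exp (θ * Complex.I)) ^ n).re = k ^ n * cos (n * θ) := by
  rw [mul_pow, ← Complex.exp_nat_mul, ← Complex.ofReal_pow, ← mul_assoc, ← Complex.ofReal_natCast,
    ← Complex.ofReal_mul, Complex.re_ofReal_mul, Complex.exp_ofReal_mul_I_re]

lemma norm_ofReal_mul_exp_lt_one {k : ℝ} (hk : |k| < 1) (θ : ℝ) :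
    ‖(k : ℂ) * Complex.exp (θ * Complex.I)‖ < 1 := by
  rwa [norm_mul, Complex.norm_exp_ofReal_mul_I, mul_one, Complex.norm_real, Real.norm_eq_abs]

lemma hasSum_pow_mul_cos {k : ℝ} (hk : |k| < 1) (θ : ℝ) :
    HasSum (fun n : ℕ => k ^ n * cos (n * θ)) ((1 - k * cos θ) / poissonDenom k θ) := by
  have h := Complex.hasSum_re
    (hasSum_geometric_of_norm_lt_one (norm_ofReal_mul_exp_lt_one hk θ))
  simp only [re_ofReal_mul_exp_pow, Complex.inv_re,
    normSq_one_sub_ofReal_mul_exp] at h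
  convert h using 2
  simp [Complex.exp_ofReal_mul_I_re]

lemma hasSum_log_poissonDenom {k : ℝ} (hk : |k| < 1) (θ : ℝ) :
    HasSum (fun n : ℕ => -2 * k ^ n * cos (n * θ) / n) (log (poissonDenom k θ)) := by
  set w : ℂ := k * Complex.exp (θ * Complex.I)
  have h := (Complex.hasSum_re
    (Complex.hasSum_taylorSeries_neg_log (norm_ofReal_mul_exp_lt_one hk θ))).mul_left (-2)
  have hterm : ∀ n : ℕ, -2 * k ^ n * cos (n * θ) / n = -2 * (w ^ n / n).re := fun n => by
    rw [← Complex.ofReal_natCast, Complex.div_ofReal_re, re_ofReal_mul_exp_pow]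
    ring
  have hsum : log (poissonDenom k θ) = -2 * (-Complex.log (1 - w)).re := by
    rw [Complex.neg_re, Complex.log_re, ← normSq_one_sub_ofReal_mul_exp,
      Complex.normSq_eq_norm_sq, Real.log_pow]
    push_cast
    ring
  simpa only [hterm, hsum] using h

lemma hasSum_intervalIntegral_of_geometric_bound {F : ℕ → ℝ → ℝ} {f : ℝ → ℝ} {a b C q : ℝ}
    (hF : ∀ n, Continuous (F n)) (hq₀ : 0 ≤ q) (hq : q < 1)
    (hbound : ∀ n t, ‖F n t‖ ≤ C * q ^ n) (hf : ∀ t, HasSum (fun n => F n t) (f t)) :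
    HasSum (fun n => ∫ t in a..b, F n t) (∫ t in a..b, f t) :=
  intervalIntegral.hasSum_integral_of_dominated_convergence (fun n _ => C * q ^ n)
    (fun n => (hF n).aestronglyMeasurable) (fun n => ae_of_all _ fun t _ => hbound n t)
    (ae_of_all _ fun _ _ => (summable_geometric_of_lt_one hq₀ hq).mul_left C)
    intervalIntegrable_const (ae_of_all _ fun t _ => hf t)

lemma integral_cos_int_mul (j : ℤ) :
    ∫ θ in (0 : ℝ)..π, cos (j * θ) = if j = 0 then π else 0 := by
  split_ifs with hj
  · simp [hj]
  · have hj' : (j : ℝ) ≠ 0 := Int.cast_ne_zero.2 hj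
    rw [intervalIntegral.integral_comp_mul_left (fun θ => cos θ) hj', integral_cos, mul_zero,
      sin_zero, sin_int_mul_pi, sub_zero, smul_zero]

lemma integral_cos_nat_mul_mul_cos_nat_mul (n m : ℕ) :
    ∫ θ in (0 : ℝ)..π, cos (n * θ) * cos (m * θ) =
      if n = m then (if m = 0 then π else π / 2) else 0 := by
  have hprod : ∀ θ : ℝ, cos (n * θ) * cos (m * θ) =
      cos (((n - m : ℤ) : ℝ) * θ) / 2 + cos (((n + m : ℤ) : ℝ) * θ) / 2 := fun θ => by
    push_cast
    rw [sub_mul, add_mul, cos_sub, cos_add]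
    ring
  simp_rw [hprod]
  rw [intervalIntegral.integral_add ((by fun_prop : Continuous _).intervalIntegrable _ _)
    ((by fun_prop : Continuous _).intervalIntegrable _ _), intervalIntegral.integral_div,
    intervalIntegral.integral_div, integral_cos_int_mul, integral_cos_int_mul]
  rcases eq_or_ne n m with rfl | hnm
  · rcases eq_or_ne n 0 with rfl | hn <;> simp [*]
  · have h₁ : (n - m : ℤ) ≠ 0 := sub_ne_zero.2 (by exact_mod_cast hnm)
    have h₂ : (n + m : ℤ) ≠ 0 := by omega
    simp [hnm, h₁, h₂]

lemma integral_cos_nat_mul_div_poissonDenom {k : ℝ} (hk : |k| < 1) (m : ℕ) :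
    ∫ θ in (0 : ℝ)..π, cos (m * θ) / poissonDenom k θ = π * k ^ m / (1 - k ^ 2) := by
  have hD := poissonDenom_pos hk
  have hk2 : 1 - k ^ 2 ≠ 0 := by
    have := sq_lt_one_iff_abs_lt_one k |>.2 hk
    linarith
  have hseries : HasSum (fun n : ℕ => ∫ θ in (0 : ℝ)..π, k ^ n * cos (n * θ) * cos (m * θ))
      (∫ θ in (0 : ℝ)..π, (1 - k * cos θ) / poissonDenom k θ * cos (m * θ)) := by
    refine hasSum_intervalIntegral_of_geometric_bound (C := 1) (fun n => by fun_prop)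
      (abs_nonneg k) hk (fun n θ => ?_) (fun θ => (hasSum_pow_mul_cos hk θ).mul_right _)
    rw [norm_mul, norm_mul, norm_pow, Real.norm_eq_abs, one_mul]
    exact mul_le_of_le_one_right (by positivity) (abs_cos_le_one _) |>.trans
      (mul_le_of_le_one_right (by positivity) (abs_cos_le_one _))
  have hsingle : HasSum (fun n : ℕ => ∫ θ in (0 : ℝ)..π, k ^ n * cos (n * θ) * cos (m * θ))
      (k ^ m * if m = 0 then π else π / 2) := by
    simp_rw [mul_assoc, intervalIntegral.integral_const_mul,
      integral_cos_nat_mul_mul_cos_nat_mul]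
    convert hasSum_single (f := fun n : ℕ => k ^ n *
      if n = m then (if m = 0 then π else π / 2) else 0) m fun n hn => by simp [hn] using 1
    simp
  have hpoisson : ∀ θ, (1 - k ^ 2) * (cos (m * θ) / poissonDenom k θ) =
      2 * ((1 - k * cos θ) / poissonDenom k θ * cos (m * θ)) - cos (m * θ) := fun θ => by
    field_simp [(hD θ).ne']
    unfold poissonDenom
    ring
  rw [eq_div_iff hk2, mul_comm, ← intervalIntegral.integral_const_mul]
  simp_rw [hpoisson]
  have hcont : Continuous fun θ => 2 * ((1 - k * cos θ) / poissonDenom k θ * cos (m * θ)) :=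
    continuous_const.mul (((by fun_prop : Continuous fun θ => 1 - k * cos θ).div
      (continuous_poissonDenom k) fun θ => (hD θ).ne').mul (by fun_prop))
  rw [intervalIntegral.integral_sub (hcont.intervalIntegrable _ _)
    ((by fun_prop : Continuous _).intervalIntegrable _ _), intervalIntegral.integral_const_mul,
    hseries.unique hsingle]
  have hcos : ∫ θ in (0 : ℝ)..π, cos (m * θ) = if m = 0 then π else 0 := by
    exact_mod_cast integral_cos_int_mul m
  rw [hcos]
  rcases eq_or_ne m 0 with rfl | hm <;> simp [*] <;> ring

lemma integral_inv_poissonDenom {k : ℝ} (hk : |k| < 1) :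
    ∫ θ in (0 : ℝ)..π, (poissonDenom k θ)⁻¹ = π / (1 - k ^ 2) := by
  simpa using integral_cos_nat_mul_div_poissonDenom hk 0

lemma abs_div_natCast_le (x : ℝ) (n : ℕ) : |x / n| ≤ |x| := by
  rcases n.eq_zero_or_pos with rfl | hn
  · simp
  · rw [abs_div, Nat.abs_cast]
    exact div_le_self (abs_nonneg x) (by exact_mod_cast hn)

lemma integral_log_poissonDenom_div_poissonDenom {k₁ k₂ : ℝ} (hk₁ : |k₁| < 1) (hk₂ : |k₂| < 1) :
    ∫ θ in (0 : ℝ)..π, log (poissonDenom k₂ θ) / poissonDenom k₁ θ =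
      π * log ((1 - k₁ * k₂) ^ 2) / (1 - k₁ ^ 2) := by
  have hD := poissonDenom_pos hk₁
  have hgap : 0 < (1 - |k₁|) ^ 2 := pow_pos (sub_pos.2 hk₁) 2
  have hseries : HasSum
      (fun n : ℕ => ∫ θ in (0 : ℝ)..π, -2 * k₂ ^ n * cos (n * θ) / n / poissonDenom k₁ θ)
      (∫ θ in (0 : ℝ)..π, log (poissonDenom k₂ θ) / poissonDenom k₁ θ) := by
    refine hasSum_intervalIntegral_of_geometric_bound (C := 2 / (1 - |k₁|) ^ 2)
      (fun n => (by fun_prop : Continuous _).div (continuous_poissonDenom k₁) fun θ => (hD θ).ne')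
      (abs_nonneg k₂) hk₂ (fun n θ => ?_) fun θ => (hasSum_log_poissonDenom hk₂ θ).div_const _
    have hnum : |-2 * k₂ ^ n * cos (n * θ) / n| ≤ 2 * |k₂| ^ n := by
      refine (abs_div_natCast_le _ n).trans ?_
      rw [abs_mul, abs_mul, abs_neg, abs_two, abs_pow]
      exact mul_le_of_le_one_right (by positivity) (abs_cos_le_one _)
    rw [Real.norm_eq_abs, abs_div, abs_of_pos (hD θ), div_mul_eq_mul_div]
    exact div_le_div₀ (by positivity) hnum hgap (sq_one_sub_abs_le_poissonDenom k₁ θ)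
  -- the coefficients are those of `log (poissonDenom (k₁ * k₂) 0)`, rescaled
  have hcoeff : ∀ n : ℕ,
      ∫ θ in (0 : ℝ)..π, -2 * k₂ ^ n * cos (n * θ) / n / poissonDenom k₁ θ =
        -2 * (k₁ * k₂) ^ n * cos (n * 0) / n * (π / (1 - k₁ ^ 2)) := fun n => by
    have hsplit : ∀ θ, -2 * k₂ ^ n * cos (n * θ) / n / poissonDenom k₁ θ =
        -2 * k₂ ^ n / n * (cos (n * θ) / poissonDenom k₁ θ) := fun θ => by ring
    simp_rw [hsplit]
    rw [intervalIntegral.integral_const_mul, integral_cos_nat_mul_div_poissonDenom hk₁, mul_zero,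
      cos_zero, mul_pow]
    ring
  have hk₁k₂ : |k₁ * k₂| < 1 := by
    rw [abs_mul]
    exact mul_lt_one_of_nonneg_of_lt_one_left (abs_nonneg _) hk₁ hk₂.le
  have hvalue : poissonDenom (k₁ * k₂) 0 = (1 - k₁ * k₂) ^ 2 := by
    rw [poissonDenom, cos_zero]
    ring
  simp_rw [hcoeff] at hseries
  rw [hseries.unique ((hasSum_log_poissonDenom hk₁k₂ 0).mul_right _), hvalue]
  ring

lemma exists_joukowski_param {r p : ℝ} (hr : 0 < r) (hp : r < p) :
    ∃ k, 0 < k ∧ k < 1 ∧ p = r * (1 + k ^ 2) / (2 * k) ∧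
      √(p ^ 2 - r ^ 2) = r * (1 - k ^ 2) / (2 * k) := by
  set W := √(p ^ 2 - r ^ 2)
  have hW : W ^ 2 = p ^ 2 - r ^ 2 := sq_sqrt (by nlinarith)
  have hW₀ : 0 ≤ W := sqrt_nonneg _
  have hWp : W < p := by nlinarith
  have hpW : p - W < r := by nlinarith
  have hpW₀ : 0 < p - W := by linarith
  refine ⟨(p - W) / r, div_pos hpW₀ hr, (div_lt_one hr).2 hpW, ?_, ?_⟩ <;>
    field_simp [hpW₀.ne'] <;> linear_combination -hW

lemma joukowski_sub_mul_cos {r k : ℝ} (hk : k ≠ 0) (θ : ℝ) :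
    r * (1 + k ^ 2) / (2 * k) - r * cos θ = r / (2 * k) * poissonDenom k θ := by
  rw [poissonDenom]
  field_simp
  ring

lemma integral_log_sub_mul_cos_div_sub_mul_cos {r p₁ p₂ : ℝ} (hr : 0 < r) (h₁ : r < p₁)
    (h₂ : r < p₂) :
    ∫ θ in (0 : ℝ)..π, log (p₂ - r * cos θ) / (p₁ - r * cos θ) =
      π / √(p₁ ^ 2 - r ^ 2) * log ((p₁ * p₂ - r ^ 2 + √(p₁ ^ 2 - r ^ 2) * √(p₂ ^ 2 - r ^ 2)) /
        (p₁ + √(p₁ ^ 2 - r ^ 2))) := by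
  obtain ⟨k₁, hk₁₀, hk₁, hp₁, hW₁⟩ := exists_joukowski_param hr h₁
  obtain ⟨k₂, hk₂₀, hk₂, hp₂, hW₂⟩ := exists_joukowski_param hr h₂
  have hk₁' : |k₁| < 1 := by rwa [abs_of_pos hk₁₀]
  have hk₂' : |k₂| < 1 := by rwa [abs_of_pos hk₂₀]
  have hD₁ := poissonDenom_pos hk₁'
  have hD₂ := poissonDenom_pos hk₂'
  have hintegrand : ∀ θ, log (p₂ - r * cos θ) / (p₁ - r * cos θ) =
      2 * k₁ / r * log (r / (2 * k₂)) * (poissonDenom k₁ θ)⁻¹ +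
        2 * k₁ / r * (log (poissonDenom k₂ θ) / poissonDenom k₁ θ) := fun θ => by
    rw [hp₁, hp₂, joukowski_sub_mul_cos hk₁₀.ne', joukowski_sub_mul_cos hk₂₀.ne',
      log_mul (by positivity) (hD₂ θ).ne']
    field_simp
  have hcont₁ : Continuous fun θ => (poissonDenom k₁ θ)⁻¹ :=
    (continuous_poissonDenom k₁).inv₀ fun θ => (hD₁ θ).ne'
  have hcont₂ : Continuous fun θ => log (poissonDenom k₂ θ) / poissonDenom k₁ θ :=
    ((continuous_poissonDenom k₂).log fun θ => (hD₂ θ).ne').div (continuous_poissonDenom k₁)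
      fun θ => (hD₁ θ).ne'
  simp_rw [hintegrand]
  rw [intervalIntegral.integral_add ((hcont₁.intervalIntegrable _ _).const_mul _)
      ((hcont₂.intervalIntegrable _ _).const_mul _),
    intervalIntegral.integral_const_mul, intervalIntegral.integral_const_mul,
    integral_inv_poissonDenom hk₁', integral_log_poissonDenom_div_poissonDenom hk₁' hk₂']
  have harg : (p₁ * p₂ - r ^ 2 + √(p₁ ^ 2 - r ^ 2) * √(p₂ ^ 2 - r ^ 2)) /
      (p₁ + √(p₁ ^ 2 - r ^ 2)) = r / (2 * k₂) * (1 - k₁ * k₂) ^ 2 := by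
    rw [hW₁, hW₂, hp₁, hp₂]
    field_simp
    ring
  have hk₁k₂ : k₁ * k₂ < 1 := mul_lt_one_of_nonneg_of_lt_one_left hk₁₀.le hk₁ hk₂.le
  rw [harg, log_mul (by positivity) (pow_ne_zero 2 (sub_pos.2 hk₁k₂).ne'), hW₁]
  field_simp

lemma setIntegral_Ioo_div_sqrt_eq_intervalIntegral {a b : ℝ} (hab : a < b) (g : ℝ → ℝ) :
    ∫ x in Ioo a b, g x / √((b - x) * (x - a)) =
      ∫ θ in (0 : ℝ)..π, g ((a + b) / 2 - (b - a) / 2 * cos θ) := by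
  set r := (b - a) / 2
  set f : ℝ → ℝ := fun θ => (a + b) / 2 - r * cos θ
  have hr : 0 < r := by simp only [r]; linarith
  have hmono : StrictMonoOn f (Icc 0 π) := fun x hx y hy hxy =>
    sub_lt_sub_left (mul_lt_mul_of_pos_left (strictAntiOn_cos hx hy hxy) hr) _
  have himage : f '' Ioo 0 π = Ioo a b := by
    rw [(by fun_prop : Continuous f).continuousOn.image_Ioo_of_strictMonoOn pi_pos.le hmono]
    congr 1 <;> simp only [f, r, cos_zero, cos_pi] <;> ring
  have hderiv : ∀ θ ∈ Ioo 0 π, HasDerivWithinAt f (r * sin θ) (Ioo 0 π) θ := fun θ _ => by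
    simpa using (((hasDerivAt_cos θ).const_mul r).const_sub ((a + b) / 2)).hasDerivWithinAt
  rw [← himage, integral_image_eq_integral_abs_deriv_smul measurableSet_Ioo hderiv
      (hmono.injOn.mono Ioo_subset_Icc_self),
    intervalIntegral.integral_of_le pi_pos.le, integral_Ioc_eq_integral_Ioo]
  refine setIntegral_congr_fun measurableSet_Ioo fun θ hθ => ?_
  have hsin := sin_pos_of_pos_of_lt_pi hθ.1 hθ.2
  have hsq : (b - f θ) * (f θ - a) = (r * sin θ) ^ 2 := by
    simp only [f, r]
    linear_combination (-((b - a) / 2) ^ 2) * sin_sq_add_cos_sq θ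
  rw [hsq, sqrt_sq (by positivity), abs_of_pos (by positivity), smul_eq_mul]
  exact mul_div_cancel₀ _ (by positivity)

theorem stmt_7 (a b t₁ t₂ : ℝ) (hab : a < b) (h₁ : 0 < t₁ + a) (h₂ : 0 < t₂ + a) :
    (1 / (2 * Real.pi)) *
        ∫ x in Set.Ioo a b, Real.log (x + t₂) / ((x + t₁) * Real.sqrt ((b - x) * (x - a)))
      = (1 / (2 * Real.sqrt ((t₁ + a) * (t₁ + b)))) *
          Real.log (((Real.sqrt ((t₁ + a) * (t₁ + b)) + Real.sqrt ((t₂ + a) * (t₂ + b))) ^ 2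
              - (t₁ - t₂) ^ 2) /
            (Real.sqrt (t₁ + a) + Real.sqrt (t₁ + b)) ^ 2) := by
  set r := (b - a) / 2
  set p₁ := t₁ + (a + b) / 2
  set p₂ := t₂ + (a + b) / 2
  have hW₁ : (t₁ + a) * (t₁ + b) = p₁ ^ 2 - r ^ 2 := by simp only [p₁, r]; ring
  have hW₂ : (t₂ + a) * (t₂ + b) = p₂ ^ 2 - r ^ 2 := by simp only [p₂, r]; ring
  have hsubst : ∫ x in Ioo a b, log (x + t₂) / ((x + t₁) * √((b - x) * (x - a))) =
      ∫ θ in (0 : ℝ)..π, log (p₂ - r * cos θ) / (p₁ - r * cos θ) := by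
    simp_rw [← div_div, setIntegral_Ioo_div_sqrt_eq_intervalIntegral hab]
    simp only [p₁, p₂, r]
    ring_nf
  rw [hsubst, integral_log_sub_mul_cos_div_sub_mul_cos (by simp only [r]; linarith)
    (by simp only [p₁, r]; linarith) (by simp only [p₂, r]; linarith), hW₁, hW₂]
  have hsqrt : (√(t₁ + a) + √(t₁ + b)) ^ 2 = 2 * (p₁ + √(p₁ ^ 2 - r ^ 2)) := by
    rw [add_sq, sq_sqrt h₁.le, sq_sqrt (by linarith), mul_assoc, ← sqrt_mul h₁.le, hW₁]
    ring
  have hnum : (√(p₁ ^ 2 - r ^ 2) + √(p₂ ^ 2 - r ^ 2)) ^ 2 - (t₁ - t₂) ^ 2 =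
      2 * (p₁ * p₂ - r ^ 2 + √(p₁ ^ 2 - r ^ 2) * √(p₂ ^ 2 - r ^ 2)) := by
    rw [add_sq, sq_sqrt (by rw [← hW₁]; nlinarith), sq_sqrt (by rw [← hW₂]; nlinarith)]
    ring
  rw [hsqrt, hnum, mul_div_mul_left _ _ two_ne_zero, ← mul_assoc]
  congr 1
  field_simp
end
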